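/- Let G_{S,D}, G_{S,R_1}, G_{S,R_2}, G_{R_1,D}, G_{R_2,D} be independent random variables, each exponentially distributed with rates λ_{S,D}, λ_{S,R_1}, λ_{S,R_2}, λ_{R_1,D}, λ_{R_2,D} > 0 respectively, and fix r ∈ (0, 1/2). For j ∈ {1,2} let E_j denote the event that relay j decodes and the other relay j' fails, i.e. E_j = {1+sG_{S,R_j} ≥ (1+s)^{2r}} ∩ {1+sG_{S,R_{j'}} < (1+s)^{2r}}. Then as s → ∞, Pr[ ∪_{j=1,2} ( E_j ∩ {1+s(G_{S,D}+G_{R_j,D}) < (1+s)^{2r}} ) ] is asymptotically equivalent to (1/2)·(λ_{S,R_2}·λ_{R_1,D} + λ_{S,R_1}·λ_{R_2,D})·λ_{S,D}·s^{−3(1−2r)}. -/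

import Mathlib

/-!
Put `t = ((1 + s) ^ (2 r) - 1) / s`, so that `t ~ s ^ (2 r - 1) → 0⁺`. For `s > 0` the two outage
events read `G_{S,R_j} ≥ t, G_{S,R_j'} < t, G_{S,D} + G_{R_j,D} < t`; they are disjoint and, by
independence, each has probability `P(Exp(a) ≥ t) · P(Exp(b) < t) · P(Exp(c) + Exp(d) < t)`.
As `t → 0⁺` these factors are asymptotic to `1`, `b t` and `c d t² / 2`. The last two are squeezed
between their limit shape and that shape times `exp (-κ t) → 1`; for the convolution this comes
from bounding the integrand `c e^{-c x} (1 - e^{-d (t - x)})` on `[0, t]` between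
`e^{-(c + d) t} c d (t - x)` and `c d (t - x)`.
-/

open MeasureTheory ProbabilityTheory Filter Asymptotics Real
open Set Topology

namespace Asymptotics

theorem isEquivalent_of_mul_le_of_le {α : Type*} {l : Filter α} {f g e : α → ℝ}
    (he : Tendsto e l (𝓝 1)) (hg : ∀ᶠ x in l, 0 < g x)
    (hlow : ∀ᶠ x in l, e x * g x ≤ f x) (hup : ∀ᶠ x in l, f x ≤ g x) : f ~[l] g := by
  refine isEquivalent_of_tendsto_one (tendsto_of_tendsto_of_tendsto_of_le_of_le' he
    tendsto_const_nhds ?_ ?_)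
  · filter_upwards [hg, hlow] with x hgx hx
    exact (le_div_iff₀ hgx).2 hx
  · filter_upwards [hg, hup] with x hgx hx
    exact div_le_one_of_le₀ hx hgx.le

theorem IsEquivalent.add_of_const_mul {α : Type*} {l : Filter α} {u v w : α → ℝ} {a b : ℝ}
    (hab : a + b ≠ 0) (hu : u ~[l] fun x ↦ a * w x) (hv : v ~[l] fun x ↦ b * w x) :
    u + v ~[l] fun x ↦ (a + b) * w x := by
  have hsum := (hu.isLittleO.trans_isBigO (isBigO_const_mul_self a w l)).add
    (hv.isLittleO.trans_isBigO (isBigO_const_mul_self b w l))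
  have hsplit : (u + v) - (fun x ↦ (a + b) * w x)
      = (u - fun x ↦ a * w x) + (v - fun x ↦ b * w x) := by
    ext x
    simp only [Pi.sub_apply, Pi.add_apply]
    ring
  exact IsLittleO.isEquivalent (hsplit ▸ hsum.trans_isBigO (isBigO_self_const_mul hab w l))

end Asymptotics

section Elementary

variable {a b u x : ℝ}

theorem mul_exp_neg_le_one_sub_exp_neg (v : ℝ) : v * exp (-v) ≤ 1 - exp (-v) := by
  have h := mul_le_mul_of_nonneg_right (add_one_le_exp v) (exp_pos (-v)).le
  rw [← exp_add, add_neg_cancel, exp_zero] at h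
  linarith

theorem one_sub_exp_neg_le (v : ℝ) : 1 - exp (-v) ≤ v := by
  linarith [one_sub_le_exp_neg v]

theorem tendsto_exp_neg_mul_nhdsGT_zero (a : ℝ) :
    Tendsto (fun u ↦ exp (-(a * u))) (𝓝[>] 0) (𝓝 1) := by
  have h : Tendsto (fun u ↦ exp (-(a * u))) (𝓝 0) (𝓝 (exp (-(a * 0)))) :=
    (by fun_prop : Continuous fun u ↦ exp (-(a * u))).tendsto 0
  simpa using h.mono_left nhdsWithin_le_nhds

theorem le_mul_exp_neg_mul_one_sub_exp_neg (ha : 0 < a) (hb : 0 < b) (hx : 0 ≤ x)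
    (hxu : x ≤ u) :
    exp (-((a + b) * u)) * (a * b) * (u - x) ≤ a * exp (-(a * x)) * (1 - exp (-(b * (u - x)))) :=
  calc exp (-((a + b) * u)) * (a * b) * (u - x)
      = a * exp (-(a * u)) * (b * (u - x) * exp (-(b * u))) := by
        rw [add_mul, neg_add, exp_add]; ring
    _ ≤ a * exp (-(a * x)) * (b * (u - x) * exp (-(b * (u - x)))) := by
        have : 0 ≤ u - x := by linarith
        gcongr
        linarith
    _ ≤ a * exp (-(a * x)) * (1 - exp (-(b * (u - x)))) := by
        gcongr
        exact mul_exp_neg_le_one_sub_exp_neg _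

theorem mul_exp_neg_mul_one_sub_exp_neg_le (ha : 0 < a) (hb : 0 < b) (hx : 0 ≤ x)
    (hxu : x ≤ u) :
    a * exp (-(a * x)) * (1 - exp (-(b * (u - x)))) ≤ a * b * (u - x) :=
  calc a * exp (-(a * x)) * (1 - exp (-(b * (u - x))))
      ≤ a * 1 * (b * (u - x)) := by
        have : 0 ≤ 1 - exp (-(b * (u - x))) :=
          sub_nonneg.2 (exp_le_one_iff.2 (by nlinarith))
        gcongr
        · exact exp_le_one_iff.2 (by nlinarith)
        · exact one_sub_exp_neg_le _
    _ = a * b * (u - x) := by ring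

theorem integral_Icc_const_mul_sub (K : ℝ) (hu : 0 ≤ u) :
    ∫ x in Icc 0 u, K * (u - x) = K * u ^ 2 / 2 := by
  rw [integral_Icc_eq_integral_Ioc, ← intervalIntegral.integral_of_le hu,
    intervalIntegral.integral_const_mul, intervalIntegral.integral_sub intervalIntegrable_const
      intervalIntegral.intervalIntegrable_id, intervalIntegral.integral_const, integral_id]
  simp only [sub_zero, smul_eq_mul]
  ring

end Elementary

namespace ProbabilityTheory

variable {a b c d : ℝ}

instance nullSingletonClass_expMeasure : NullSingletonClass (expMeasure a) := by
  unfold expMeasure gammaMeasure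
  infer_instance

theorem expMeasure_Iio (ha : 0 < a) (v : ℝ) :
    expMeasure a (Iio v) = ENNReal.ofReal (1 - exp (-(a * v))) := by
  have := isProbabilityMeasure_expMeasure ha
  rw [measure_congr Iio_ae_eq_Iic, ← ofReal_cdf, cdf_expMeasure_eq ha]
  split_ifs with hv
  · rfl
  · rw [ENNReal.ofReal_zero, eq_comm, ENNReal.ofReal_eq_zero, sub_nonpos]
    exact one_le_exp (by nlinarith)

theorem expMeasure_real_Iio (ha : 0 < a) {v : ℝ} (hv : 0 ≤ v) :
    (expMeasure a).real (Iio v) = 1 - exp (-(a * v)) := by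
  rw [measureReal_def, expMeasure_Iio ha, ENNReal.toReal_ofReal]
  linarith [exp_le_one_iff.2 (neg_nonpos.2 (mul_nonneg ha.le hv))]

theorem expMeasure_real_Ici (ha : 0 < a) {v : ℝ} (hv : 0 ≤ v) :
    (expMeasure a).real (Ici v) = exp (-(a * v)) := by
  have := isProbabilityMeasure_expMeasure ha
  rw [← compl_Iio, probReal_compl_eq_one_sub measurableSet_Iio, expMeasure_real_Iio ha hv]
  ring

theorem expMeasure_prod_real_add_lt (ha : 0 < a) (hb : 0 < b) (u : ℝ) :
    ((expMeasure a).prod (expMeasure b)).real {p : ℝ × ℝ | p.1 + p.2 < u}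
      = ∫ x in Icc 0 u, a * exp (-(a * x)) * (1 - exp (-(b * (u - x)))) := by
  have := isProbabilityMeasure_expMeasure hb
  have hslice (x : ℝ) : Prod.mk x ⁻¹' {p : ℝ × ℝ | p.1 + p.2 < u} = Iio (u - x) := by
    ext y; simp [lt_sub_iff_add_lt']
  have hdensity : expMeasure a = volume.withDensity (exponentialPDF a) := rfl
  have hpdf (x : ℝ) : exponentialPDF a x * ENNReal.ofReal (1 - exp (-(b * (u - x))))
      = (Icc 0 u).indicator (fun x ↦ ENNReal.ofReal (a * exp (-(a * x)) *
          (1 - exp (-(b * (u - x)))))) x := by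
    rcases lt_or_ge x 0 with hx | hx
    · simp [exponentialPDF_of_neg hx, hx.not_ge]
    rcases le_or_gt x u with hxu | hxu
    · rw [exponentialPDF_of_nonneg hx, indicator_of_mem (show x ∈ Icc 0 u from ⟨hx, hxu⟩),
        ← ENNReal.ofReal_mul (by positivity)]
    · rw [indicator_of_notMem (fun h ↦ hxu.not_ge h.2), ENNReal.ofReal_eq_zero.2, mul_zero]
      exact sub_nonpos.2 (one_le_exp (by nlinarith))
  have hS : MeasurableSet {p : ℝ × ℝ | p.1 + p.2 < u} := by measurability
  rw [measureReal_def, Measure.prod_apply hS]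
  simp only [hslice, expMeasure_Iio hb]
  rw [hdensity, lintegral_withDensity_eq_lintegral_mul _
      (show Measurable (exponentialPDF a) from (measurable_exponentialPDFReal a).ennreal_ofReal)
      (by fun_prop)]
  simp only [Pi.mul_apply, hpdf]
  rw [lintegral_indicator measurableSet_Icc, integral_eq_lintegral_of_nonneg_ae]
  · filter_upwards [ae_restrict_mem measurableSet_Icc] with x hx
    exact (mul_nonneg (by positivity) (by linarith [hx.2])).trans
      (le_mul_exp_neg_mul_one_sub_exp_neg ha hb hx.1 hx.2)
  · exact (by fun_prop : Continuous fun x ↦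
      a * exp (-(a * x)) * (1 - exp (-(b * (u - x))))).aestronglyMeasurable

theorem tendsto_expMeasure_real_Ici (ha : 0 < a) :
    Tendsto (fun u ↦ (expMeasure a).real (Ici u)) (𝓝[>] 0) (𝓝 1) := by
  refine (tendsto_exp_neg_mul_nhdsGT_zero a).congr' ?_
  filter_upwards [self_mem_nhdsWithin] with u (hu : 0 < u)
  rw [expMeasure_real_Ici ha hu.le]

theorem isEquivalent_expMeasure_real_Iio (ha : 0 < a) :
    (fun u ↦ (expMeasure a).real (Iio u)) ~[𝓝[>] 0] fun u ↦ a * u := by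
  refine isEquivalent_of_mul_le_of_le (tendsto_exp_neg_mul_nhdsGT_zero a) ?_ ?_ ?_ <;>
    filter_upwards [self_mem_nhdsWithin] with u (hu : 0 < u)
  · positivity
  · rw [expMeasure_real_Iio ha hu.le, mul_comm]
    exact mul_exp_neg_le_one_sub_exp_neg _
  · rw [expMeasure_real_Iio ha hu.le]
    exact one_sub_exp_neg_le _

theorem isEquivalent_expMeasure_prod_real_add_lt (ha : 0 < a) (hb : 0 < b) :
    (fun u ↦ ((expMeasure a).prod (expMeasure b)).real {p : ℝ × ℝ | p.1 + p.2 < u})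
      ~[𝓝[>] 0] fun u ↦ a * b / 2 * u ^ 2 := by
  have hcont (K : ℝ) (u : ℝ) : IntegrableOn (fun x ↦ K * (u - x)) (Icc 0 u) :=
    (by fun_prop : Continuous fun x ↦ K * (u - x)).integrableOn_Icc
  have hint (u : ℝ) : IntegrableOn (fun x ↦ a * exp (-(a * x)) * (1 - exp (-(b * (u - x)))))
      (Icc 0 u) := (by fun_prop : Continuous fun x ↦
        a * exp (-(a * x)) * (1 - exp (-(b * (u - x))))).integrableOn_Icc
  refine isEquivalent_of_mul_le_of_le (tendsto_exp_neg_mul_nhdsGT_zero (a + b)) ?_ ?_ ?_ <;>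
    filter_upwards [self_mem_nhdsWithin] with u (hu : 0 < u)
  · positivity
  · rw [expMeasure_prod_real_add_lt ha hb]
    calc exp (-((a + b) * u)) * (a * b / 2 * u ^ 2)
        = ∫ x in Icc 0 u, exp (-((a + b) * u)) * (a * b) * (u - x) := by
          rw [integral_Icc_const_mul_sub _ hu.le]; ring
      _ ≤ _ := setIntegral_mono_on (hcont _ u) (hint u) measurableSet_Icc
          fun x hx ↦ le_mul_exp_neg_mul_one_sub_exp_neg ha hb hx.1 hx.2
  · rw [expMeasure_prod_real_add_lt ha hb]
    calc _ ≤ ∫ x in Icc 0 u, a * b * (u - x) := setIntegral_mono_on (hint u) (hcont _ u)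
          measurableSet_Icc fun x hx ↦ mul_exp_neg_mul_one_sub_exp_neg_le ha hb hx.1 hx.2
      _ = a * b / 2 * u ^ 2 := by rw [integral_Icc_const_mul_sub _ hu.le]; ring

theorem isEquivalent_expMeasure_Ici_mul_Iio_mul_prod_add_lt (ha : 0 < a) (hb : 0 < b)
    (hc : 0 < c) (hd : 0 < d) :
    (fun u ↦ (expMeasure a (Ici u) * expMeasure b (Iio u) *
        (expMeasure c).prod (expMeasure d) {p : ℝ × ℝ | p.1 + p.2 < u}).toReal)
      ~[𝓝[>] 0] fun u ↦ b * c * d / 2 * u ^ 3 := by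
  have h := (((isEquivalent_const_iff_tendsto one_ne_zero).2 (tendsto_expMeasure_real_Ici ha)).mul
    (isEquivalent_expMeasure_real_Iio hb)).mul (isEquivalent_expMeasure_prod_real_add_lt hc hd)
  refine (h.congr_left (Eventually.of_forall fun u ↦ ?_)).congr_right
    (Eventually.of_forall fun u ↦ ?_)
  · simp [measureReal_def]
  · simp only [Pi.mul_apply, Function.const_apply]; ring

end ProbabilityTheory

section Threshold

variable {p : ℝ}

theorem isEquivalent_one_add_rpow_sub_one_div (hp : 0 < p) :
    (fun s : ℝ ↦ ((1 + s) ^ p - 1) / s) ~[atTop] fun s ↦ s ^ (p - 1) := by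
  have hbase : Tendsto (fun s : ℝ ↦ ((1 + s) / s) ^ p) atTop (𝓝 1) := by
    have h : Tendsto (fun s : ℝ ↦ s⁻¹ + 1) atTop (𝓝 1) := by
      simpa using tendsto_inv_atTop_zero.add_const (1 : ℝ)
    have hpow := (continuousAt_rpow_const 1 p (Or.inl one_ne_zero)).tendsto
    rw [one_rpow] at hpow
    refine hpow.comp (h.congr' ?_)
    filter_upwards [eventually_gt_atTop 0] with s hs
    field_simp
  have h := hbase.sub (tendsto_rpow_neg_atTop hp)
  rw [sub_zero] at h
  refine isEquivalent_of_tendsto_one (h.congr' ?_)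
  filter_upwards [eventually_gt_atTop 0] with s hs
  rw [Pi.div_apply, div_rpow (by linarith) hs.le, rpow_neg hs.le, rpow_sub_one hs.ne']
  field_simp

theorem tendsto_one_add_rpow_sub_one_div_nhdsGT (hp0 : 0 < p) (hp1 : p < 1) :
    Tendsto (fun s : ℝ ↦ ((1 + s) ^ p - 1) / s) atTop (𝓝[>] 0) := by
  refine tendsto_nhdsWithin_iff.2
    ⟨(isEquivalent_one_add_rpow_sub_one_div hp0).symm.tendsto_nhds ?_, ?_⟩
  · simpa using tendsto_rpow_neg_atTop (sub_pos.2 hp1)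
  · filter_upwards [eventually_gt_atTop 0] with s hs
    exact div_pos (sub_pos.2 (one_lt_rpow (by linarith) hp0)) hs

end Threshold

namespace ProbabilityTheory

variable {Ω ι : Type*} [MeasurableSpace Ω] {μ : Measure Ω} [IsFiniteMeasure μ]

theorem iIndepFun.measure_inter_preimage_inter_preimage_prodMk {β : Type*} [MeasurableSpace β]
    {G : ι → Ω → β} (hindep : iIndepFun G μ)
    (hmeas : ∀ i, Measurable (G i)) {i j k l : ι} (hij : i ≠ j) (hik : i ≠ k) (hil : i ≠ l)
    (hjk : j ≠ k) (hjl : j ≠ l) (hkl : k ≠ l) {A B : Set β} {C : Set (β × β)}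
    (hA : MeasurableSet A) (hB : MeasurableSet B) (hC : MeasurableSet C) :
    μ (G i ⁻¹' A ∩ G j ⁻¹' B ∩ (fun ω ↦ (G k ω, G l ω)) ⁻¹' C)
      = μ.map (G i) A * μ.map (G j) B * (μ.map (G k)).prod (μ.map (G l)) C := by
  have hAB : G i ⁻¹' A ∩ G j ⁻¹' B = (fun ω ↦ (G i ω, G j ω)) ⁻¹' (A ×ˢ B) := rfl
  have hkl_law : μ.map (fun ω ↦ (G k ω, G l ω)) = (μ.map (G k)).prod (μ.map (G l)) :=
    (indepFun_iff_map_prod_eq_prod_map_map (hmeas k).aemeasurable (hmeas l).aemeasurable).1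
      (hindep.indepFun hkl)
  have hpair := hindep.indepFun_prodMk_prodMk hmeas i j k l hik hil hjk hjl
  rw [hAB, hpair.measure_inter_preimage_eq_mul _ _ (hA.prod hB) hC, ← hAB,
    (hindep.indepFun hij).measure_inter_preimage_eq_mul _ _ hA hB,
    ← Measure.map_apply ((hmeas k).prodMk (hmeas l)) hC, hkl_law,
    Measure.map_apply (hmeas i) hA, Measure.map_apply (hmeas j) hB]

theorem iIndepFun.measure_threshold_inter {G : ι → Ω → ℝ} (hindep : iIndepFun G μ)
    (hmeas : ∀ i, Measurable (G i)) {i j k l : ι} (hij : i ≠ j) (hik : i ≠ k) (hil : i ≠ l)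
    (hjk : j ≠ k) (hjl : j ≠ l) (hkl : k ≠ l) {s : ℝ} (hs : 0 < s) (q : ℝ) :
    μ ({ω | 1 + s * G i ω ≥ q} ∩ {ω | 1 + s * G j ω < q}
        ∩ {ω | 1 + s * (G k ω + G l ω) < q})
      = μ.map (G i) (Ici ((q - 1) / s)) * μ.map (G j) (Iio ((q - 1) / s)) *
          (μ.map (G k)).prod (μ.map (G l)) {p : ℝ × ℝ | p.1 + p.2 < (q - 1) / s} := by
  have hlt (x : ℝ) : 1 + s * x < q ↔ x < (q - 1) / s := by
    rw [lt_div_iff₀ hs]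
    constructor <;> intro h <;> linarith
  have hS : MeasurableSet {p : ℝ × ℝ | p.1 + p.2 < (q - 1) / s} := by measurability
  rw [← hindep.measure_inter_preimage_inter_preimage_prodMk hmeas hij hik hil hjk hjl hkl
    measurableSet_Ici measurableSet_Iio hS]
  congr 1
  ext ω
  simp only [mem_inter_iff, mem_ofPred_eq, mem_preimage, mem_Ici, mem_Iio, ge_iff_le, ← not_lt,
    hlt]

theorem iIndepFun.measure_threshold_union {G : Fin 5 → Ω → ℝ} (hindep : iIndepFun G μ)
    (hmeas : ∀ i, Measurable (G i)) {s : ℝ} (hs : 0 < s) (q : ℝ) :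
    μ (({ω | 1 + s * G 1 ω ≥ q} ∩ {ω | 1 + s * G 2 ω < q}
          ∩ {ω | 1 + s * (G 0 ω + G 3 ω) < q})
        ∪ ({ω | 1 + s * G 2 ω ≥ q} ∩ {ω | 1 + s * G 1 ω < q}
          ∩ {ω | 1 + s * (G 0 ω + G 4 ω) < q}))
      = μ.map (G 1) (Ici ((q - 1) / s)) * μ.map (G 2) (Iio ((q - 1) / s)) *
          (μ.map (G 0)).prod (μ.map (G 3)) {p : ℝ × ℝ | p.1 + p.2 < (q - 1) / s}
        + μ.map (G 2) (Ici ((q - 1) / s)) * μ.map (G 1) (Iio ((q - 1) / s)) *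
          (μ.map (G 0)).prod (μ.map (G 4)) {p : ℝ × ℝ | p.1 + p.2 < (q - 1) / s} := by
  rw [measure_union (Set.disjoint_left.2 fun ω h₁ h₂ ↦ ?disjoint) ?measurable,
    hindep.measure_threshold_inter hmeas (by decide) (by decide) (by decide) (by decide)
      (by decide) (by decide) hs,
    hindep.measure_threshold_inter hmeas (by decide) (by decide) (by decide) (by decide)
      (by decide) (by decide) hs]
  case disjoint =>
    simp only [mem_inter_iff, mem_ofPred_eq] at h₁ h₂
    exact h₁.1.2.not_ge h₂.1.1
  case measurable =>
    exact ((measurableSet_le (by fun_prop) (by fun_prop)).inter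
      (measurableSet_lt (by fun_prop) (by fun_prop))).inter
      (measurableSet_lt (by fun_prop) (by fun_prop))

end ProbabilityTheory

/-- for repetition-coding based distributed delay diversity, the
probability that exactly one relay decodes and the resulting repetition channel is in
outage is asymptotically
`(1/2)(λ_{S,R₂} λ_{R₁,D} + λ_{S,R₁} λ_{R₂,D}) λ_{S,D} s^{-3(1-2r)}` as `s → ∞`. -/
theorem stmt_6
    {Ω : Type*} [MeasurableSpace Ω] (μ : Measure Ω) [IsProbabilityMeasure μ]
    (G : Fin 5 → Ω → ℝ) (lamSD lamSR1 lamSR2 lamRD1 lamRD2 : ℝ)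
    (hlamSD : 0 < lamSD) (hlamSR1 : 0 < lamSR1) (hlamSR2 : 0 < lamSR2)
    (hlamRD1 : 0 < lamRD1) (hlamRD2 : 0 < lamRD2)
    (hmeas : ∀ i, Measurable (G i))
    (hindep : iIndepFun G μ)
    (hlaw0 : μ.map (G 0) = expMeasure lamSD)
    (hlaw1 : μ.map (G 1) = expMeasure lamSR1)
    (hlaw2 : μ.map (G 2) = expMeasure lamSR2)
    (hlaw3 : μ.map (G 3) = expMeasure lamRD1)
    (hlaw4 : μ.map (G 4) = expMeasure lamRD2)
    (r : ℝ) (hr : r ∈ Set.Ioo (0:ℝ) (1/2)) :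
    (fun s : ℝ => (μ (
        ({ω | 1 + s * G 1 ω ≥ (1+s) ^ (2*r)} ∩ {ω | 1 + s * G 2 ω < (1+s) ^ (2*r)}
          ∩ {ω | 1 + s * (G 0 ω + G 3 ω) < (1+s) ^ (2*r)})
        ∪ ({ω | 1 + s * G 2 ω ≥ (1+s) ^ (2*r)} ∩ {ω | 1 + s * G 1 ω < (1+s) ^ (2*r)}
          ∩ {ω | 1 + s * (G 0 ω + G 4 ω) < (1+s) ^ (2*r)}))).toReal)
      ~[atTop]
      (fun s : ℝ =>
        (1/2) * (lamSR2 * lamRD1 + lamSR1 * lamRD2) * lamSD * s ^ (-(3*(1-2*r)))) := by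
  obtain ⟨hr0, hr1⟩ := hr
  set t : ℝ → ℝ := fun s ↦ ((1 + s) ^ (2 * r) - 1) / s
  have ht : Tendsto t atTop (𝓝[>] 0) :=
    tendsto_one_add_rpow_sub_one_div_nhdsGT (by linarith) (by linarith)
  have ht3 : (fun s ↦ t s ^ 3) ~[atTop] fun s ↦ s ^ (-(3 * (1 - 2 * r))) := by
    refine ((isEquivalent_one_add_rpow_sub_one_div (by linarith)).pow 3).congr_right ?_
    filter_upwards [eventually_gt_atTop 0] with s hs
    rw [Pi.pow_apply, ← rpow_natCast, ← rpow_mul hs.le]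
    ring_nf
  have h1 := (isEquivalent_expMeasure_Ici_mul_Iio_mul_prod_add_lt hlamSR1 hlamSR2 hlamSD
    hlamRD1).comp_tendsto ht
  have h2 := (isEquivalent_expMeasure_Ici_mul_Iio_mul_prod_add_lt hlamSR2 hlamSR1 hlamSD
    hlamRD2).comp_tendsto ht
  refine ((((h1.add_of_const_mul (w := fun s ↦ t s ^ 3) (by positivity) h2).trans
    (IsEquivalent.refl.mul ht3)).congr_right ?_).congr_left ?_)
  · exact Eventually.of_forall fun s ↦ by simp only [Pi.mul_apply]; ring
  · filter_upwards [eventually_gt_atTop 0] with s hs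
    rw [hindep.measure_threshold_union hmeas hs, ENNReal.toReal_add (by finiteness) (by finiteness),
      hlaw0, hlaw1, hlaw2, hlaw3, hlaw4]
    rfl
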